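/- Let σ be a term ordering on T^n, P = Q[x_1,...,x_n], f a nonzero polynomial in P, I an ideal with reduced σ-Gröbner basis G_σ, and δ a positive integer such that all coefficients of f and of every g ∈ G_σ with LT_σ(g) ≤_σ LT_σ(f) lie in the localization Z_δ. Then the normal form NF_{σ,I}(f) has all its coefficients in Z_δ. -/

import Mathlib

open MvPolynomial
open scoped Classical

namespace GB

variable {n : ℕ}

/-- The σ-leading exponent (leading term, as a power-product) of a polynomial;
`0` for the zero polynomial. -/
noncomputable def lexp {K : Type*} [CommSemiring K] (m : MonomialOrder (Fin n))
    (f : MvPolynomial (Fin n) K) : Fin n →₀ ℕ :=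
  m.toSyn.symm (f.support.sup fun d => m.toSyn d)

/-- The σ-leading coefficient. -/
noncomputable def lcoeff {K : Type*} [CommSemiring K] (m : MonomialOrder (Fin n))
    (f : MvPolynomial (Fin n) K) : K :=
  MvPolynomial.coeff (lexp m f) f

/-- The σ-leading monomial (leading coefficient times leading power-product). -/
noncomputable def LM {K : Type*} [CommSemiring K] (m : MonomialOrder (Fin n))
    (f : MvPolynomial (Fin n) K) : MvPolynomial (Fin n) K :=
  monomial (lexp m f) (lcoeff m f)

/-- The leading term ideal `LT_σ(I)` of an ideal, over a field. -/
noncomputable def LTIdeal {K : Type*} [Field K] (m : MonomialOrder (Fin n))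
    (I : Ideal (MvPolynomial (Fin n) K)) : Ideal (MvPolynomial (Fin n) K) :=
  Ideal.span {t | ∃ f ∈ I, f ≠ 0 ∧ t = monomial (lexp m f) (1 : K)}

/-- `G` is a σ-Gröbner basis of `I` (over a field). -/
def IsGB {K : Type*} [Field K] (m : MonomialOrder (Fin n))
    (G : Finset (MvPolynomial (Fin n) K)) (I : Ideal (MvPolynomial (Fin n) K)) : Prop :=
  (0 : MvPolynomial (Fin n) K) ∉ G ∧ (G : Set (MvPolynomial (Fin n) K)) ⊆ I ∧
    Ideal.span (G : Set (MvPolynomial (Fin n) K)) = I ∧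
    ∀ f ∈ I, f ≠ 0 → ∃ g ∈ G, lexp m g ≤ lexp m f

/-- `G` is the reduced σ-Gröbner basis of `I`. -/
def IsReducedGB {K : Type*} [Field K] (m : MonomialOrder (Fin n))
    (G : Finset (MvPolynomial (Fin n) K)) (I : Ideal (MvPolynomial (Fin n) K)) : Prop :=
  IsGB m G I ∧ (∀ g ∈ G, lcoeff m g = 1) ∧
    ∀ g ∈ G, ∀ d ∈ g.support, ∀ g' ∈ G, g' ≠ g → ¬ lexp m g' ≤ d

/-- `G` is a strong σ-Gröbner basis of the ideal `J ⊆ ℤ[x]` it generates. -/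
def IsStrongGB (m : MonomialOrder (Fin n)) (G : Finset (MvPolynomial (Fin n) ℤ))
    (J : Ideal (MvPolynomial (Fin n) ℤ)) : Prop :=
  (0 : MvPolynomial (Fin n) ℤ) ∉ G ∧ Ideal.span (G : Set (MvPolynomial (Fin n) ℤ)) = J ∧
    ∀ f ∈ J, f ≠ 0 → ∃ g ∈ G, LM m g ∣ LM m f

/-- `G` is a minimal strong σ-Gröbner basis of `J`. -/
def IsMinStrongGB (m : MonomialOrder (Fin n)) (G : Finset (MvPolynomial (Fin n) ℤ))
    (J : Ideal (MvPolynomial (Fin n) ℤ)) : Prop :=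
  IsStrongGB m G J ∧ ∀ g ∈ G, ∀ g' ∈ G, g ≠ g' → ¬ LM m g ∣ LM m g'

/-- The denominator of a polynomial with rational coefficients. -/
def den (f : MvPolynomial (Fin n) ℚ) : ℕ :=
  f.support.lcm fun d => (MvPolynomial.coeff d f).den

/-- The denominator of a finite set of polynomials. -/
noncomputable def denF (G : Finset (MvPolynomial (Fin n) ℚ)) : ℕ :=
  G.lcm den

/-- `f` scaled by `den f`, as an integer polynomial. -/
noncomputable def intScale (f : MvPolynomial (Fin n) ℚ) : MvPolynomial (Fin n) ℤ :=
  f.support.sum fun d => monomial d (MvPolynomial.coeff d f * (den f : ℚ)).num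

/-- The primitive integral part of a polynomial with rational coefficients. -/
noncomputable def primQ (f : MvPolynomial (Fin n) ℚ) : MvPolynomial (Fin n) ℤ :=
  (intScale f).support.sum fun d =>
    monomial d (MvPolynomial.coeff d (intScale f) /
      ((intScale f).support.gcd fun e => MvPolynomial.coeff e (intScale f)))

/-- Reduction of a rational number modulo `p` (meaningful when `p ∤ a.den`). -/
noncomputable def redQ (p : ℕ) (a : ℚ) : ZMod p :=
  (a.num : ZMod p) * (a.den : ZMod p)⁻¹

/-- Coefficientwise reduction modulo `p` of a polynomial with rational coefficients
(meaningful when `p` divides no coefficient denominator). -/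
noncomputable def piP (p : ℕ) (f : MvPolynomial (Fin n) ℚ) :
    MvPolynomial (Fin n) (ZMod p) :=
  f.support.sum fun d => monomial d (redQ p (MvPolynomial.coeff d f))

/-- A σ-ordered tuple of (necessarily distinct) power-products. -/
def SOrd (m : MonomialOrder (Fin n)) (L : List (Fin n →₀ ℕ)) : Prop :=
  L.Pairwise fun a b => m.toSyn a < m.toSyn b

/-- `T'` strictly σ-precedes `T`:  either `T` is a proper prefix of `T'`, or at the first
index where they differ (within both lengths) the entry of `T'` is σ-smaller. -/
def Prec (m : MonomialOrder (Fin n)) (T' T : List (Fin n →₀ ℕ)) : Prop :=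
  (T <+: T' ∧ T ≠ T') ∨
    ∃ k, k < T.length ∧ k < T'.length ∧ T.take k = T'.take k ∧
      m.toSyn (T'.getD k 0) < m.toSyn (T.getD k 0)

/-- `T'` σ-precedes or equals `T`. -/
def PrecEq (m : MonomialOrder (Fin n)) (T' T : List (Fin n →₀ ℕ)) : Prop :=
  Prec m T' T ∨ T' = T

/-- The minimal generating set of the monomial ideal `LT_σ(I)`: the set of leading
power-products of nonzero elements of `I` which are minimal w.r.t. divisibility. -/
def minGenSet {K : Type*} [Field K] (m : MonomialOrder (Fin n))
    (I : Ideal (MvPolynomial (Fin n) K)) : Set (Fin n →₀ ℕ) :=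
  {d | (∃ f ∈ I, f ≠ 0 ∧ lexp m f = d) ∧
    ∀ f ∈ I, f ≠ 0 → lexp m f ≤ d → lexp m f = d}

/-- `L` is the tuple `O_σ(I)`: the σ-ordered tuple of the minimal generating set
of `LT_σ(I)`. -/
def IsOsIdeal {K : Type*} [Field K] (m : MonomialOrder (Fin n))
    (I : Ideal (MvPolynomial (Fin n) K)) (L : List (Fin n →₀ ℕ)) : Prop :=
  SOrd m L ∧ ∀ d, d ∈ L ↔ d ∈ minGenSet m I

/-- `L` is the σ-ordered tuple of the interreduction of the set `S` of power-products. -/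
def IsOsSet (m : MonomialOrder (Fin n)) (S : Finset (Fin n →₀ ℕ))
    (L : List (Fin n →₀ ℕ)) : Prop :=
  SOrd m L ∧ ∀ d, d ∈ L ↔ (d ∈ S ∧ ∀ s ∈ S, s ≤ d → s = d)

end GB

/-!
The normal form of `f` is the remainder of dividing `f` by `G_σ`, and a division of `f` can only
ever use the `g ∈ G_σ` with `LT_σ(g) ≤_σ LT_σ(f)`. These are monic with coefficients in `ℤ_δ`, so the
division can be run over `ℤ_δ[x]`; its remainder is a normal form of `f`, hence equals
`NF_{σ,I}(f)` by uniqueness.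
-/

open scoped MonomialOrder

namespace MvPolynomial

variable {σ K : Type*} [CommRing K]

theorem exists_map_subtype_eq {S : Subring K} {p : MvPolynomial σ K}
    (hp : ∀ d, p.coeff d ∈ S) : ∃ p' : MvPolynomial σ S, map S.subtype p' = p := by
  have : (p.coeffs : Set K) ⊆ Set.range S.subtype := by
    intro a ha
    obtain ⟨d, -, rfl⟩ := mem_coeffs_iff.1 ha
    exact ⟨⟨_, hp d⟩, rfl⟩
  exact mem_range_map_iff_coeffs_subset.2 this

end MvPolynomial

namespace MonomialOrder

variable {σ R K : Type*} [CommRing R] [CommRing K] (m : MonomialOrder σ)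

theorem degree_map_of_injective {φ : R →+* K} (hφ : Function.Injective φ)
    (p : MvPolynomial σ R) : m.degree (map φ p) = m.degree p := by
  simp only [degree, support_map_of_injective p hφ]

theorem leadingCoeff_map_of_injective {φ : R →+* K} (hφ : Function.Injective φ)
    (p : MvPolynomial σ R) : m.leadingCoeff (map φ p) = φ (m.leadingCoeff p) := by
  simp only [leadingCoeff, degree_map_of_injective m hφ, coeff_map]

theorem degree_linearCombination_le {B : Set (MvPolynomial σ R)} {f : MvPolynomial σ R}
    {g : B →₀ MvPolynomial σ R}
    (hg : ∀ b : B, m.degree ((b : MvPolynomial σ R) * g b) ≼[m] m.degree f) :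
    m.degree (Finsupp.linearCombination _ (fun b : B ↦ (b : MvPolynomial σ R)) g) ≼[m]
      m.degree f := by
  rw [Finsupp.linearCombination_apply, Finsupp.sum]
  refine m.degree_sum_le.trans (Finset.sup_le fun b _ ↦ ?_)
  simpa only [smul_eq_mul, mul_comm] using hg b

theorem exists_remainder_coeff_mem (S : Subring K) {B : Set (MvPolynomial σ K)}
    (hB : ∀ b ∈ B, m.Monic b) (hBS : ∀ b ∈ B, ∀ d, b.coeff d ∈ S)
    {f : MvPolynomial σ K} (hf : ∀ d, f.coeff d ∈ S) :
    ∃ r : MvPolynomial σ K, (∀ d, r.coeff d ∈ S) ∧ f - r ∈ Ideal.span B ∧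
      m.degree r ≼[m] m.degree f ∧ ∀ c ∈ r.support, ∀ b ∈ B, ¬ m.degree b ≤ c := by
  set φ : MvPolynomial σ S →+* MvPolynomial σ K := map S.subtype
  have hinj : Function.Injective S.subtype := Subtype.val_injective
  have hB' : ∀ b ∈ φ ⁻¹' B, IsUnit (m.leadingCoeff b) := fun b hb ↦ by
    have h := hB _ hb
    rw [Monic, leadingCoeff_map_of_injective m hinj, ← map_one S.subtype] at h
    rw [hinj h]
    exact isUnit_one
  obtain ⟨f', rfl⟩ := exists_map_subtype_eq hf
  obtain ⟨g, r', hfr, hdeg, hirr⟩ := m.div_set hB' f'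
  refine ⟨φ r', fun d ↦ by simp [φ, coeff_map], ?_, ?_, ?_⟩
  · have hlc := LinearMap.mem_range_self
      (Finsupp.linearCombination _ fun b : ↥(φ ⁻¹' B) ↦ (b : MvPolynomial σ S)) g
    rw [Finsupp.range_linearCombination, Subtype.range_coe] at hlc
    rw [← map_sub, ← eq_sub_of_add_eq hfr.symm]
    refine Ideal.span_mono (Set.image_preimage_subset φ B) ?_
    rw [← Ideal.map_span]
    exact Ideal.mem_map_of_mem φ hlc
  · rw [degree_map_of_injective m hinj, degree_map_of_injective m hinj,
      eq_sub_of_add_eq' hfr.symm]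
    exact m.degree_sub_le.trans (sup_le le_rfl (m.degree_linearCombination_le hdeg))
  · intro c hc b hb
    obtain ⟨b', rfl⟩ := exists_map_subtype_eq (hBS b hb)
    rw [support_map_of_injective _ hinj] at hc
    rw [degree_map_of_injective m hinj]
    exact hirr c hc b' hb

/-- Otherwise the leading monomial of `r - r'` is a term of `r` or of `r'` that lies in `LT(I)`. -/
theorem eq_of_sub_mem_of_forall_not_degree_le {I : Ideal (MvPolynomial σ R)}
    {r r' : MvPolynomial σ R} (h : r - r' ∈ I)
    (hr : ∀ c ∈ r.support, ∀ p ∈ I, p ≠ 0 → ¬ m.degree p ≤ c)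
    (hr' : ∀ c ∈ r'.support, ∀ p ∈ I, p ≠ 0 → ¬ m.degree p ≤ c) : r = r' := by
  by_contra hne
  have h0 : r - r' ≠ 0 := sub_ne_zero.2 hne
  rcases Finset.mem_union.1 (support_sub σ r r' ((m.degree_mem_support_iff _).2 h0)) with hc | hc
  · exact hr _ hc _ h h0 le_rfl
  · exact hr' _ hc _ h h0 le_rfl

end MonomialOrder

namespace GB

variable {n : ℕ}

theorem lexp_eq_degree {K : Type*} [CommSemiring K] (m : MonomialOrder (Fin n))
    (f : MvPolynomial (Fin n) K) : lexp m f = m.degree f :=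
  rfl

theorem IsGB.forall_not_degree_le {K : Type*} [Field K] {m : MonomialOrder (Fin n)}
    {G : Finset (MvPolynomial (Fin n) K)} {I : Ideal (MvPolynomial (Fin n) K)} (hG : IsGB m G I)
    {r : MvPolynomial (Fin n) K} {D : Fin n →₀ ℕ} (hrD : m.degree r ≼[m] D)
    (hr : ∀ c ∈ r.support, ∀ g ∈ G, m.degree g ≼[m] D → ¬ m.degree g ≤ c) :
    ∀ c ∈ r.support, ∀ p ∈ I, p ≠ 0 → ¬ m.degree p ≤ c := by
  intro c hc p hp hp0 hpc
  obtain ⟨g, hgG, hgp⟩ := hG.2.2.2 p hp hp0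
  have hgc : m.degree g ≤ c := hgp.trans hpc
  refine hr c hc g hgG ?_ hgc
  calc m.toSyn (m.degree g) ≤ m.toSyn c := m.toSyn_monotone hgc
    _ ≤ m.toSyn (m.degree r) := m.le_degree hc
    _ ≤ m.toSyn D := hrD

/-- The ring `ℤ_δ ⊆ ℚ` of the statement. -/
def intAway (δ : ℕ) : Subring ℚ where
  carrier := {a | ∀ q : ℕ, q.Prime → q ∣ a.den → q ∣ δ}
  mul_mem' {a b} ha hb q hq hab :=
    ((hq.dvd_mul).1 (hab.trans (Rat.mul_den_dvd a b))).elim (ha q hq) (hb q hq)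
  one_mem' q hq h := absurd (Nat.dvd_one.1 h) hq.ne_one
  add_mem' {a b} ha hb q hq hab :=
    ((hq.dvd_mul).1 (hab.trans (Rat.add_den_dvd a b))).elim (ha q hq) (hb q hq)
  zero_mem' q hq h := absurd (Nat.dvd_one.1 h) hq.ne_one
  neg_mem' {a} ha q hq h := ha q hq (by rwa [Rat.neg_den] at h)

theorem coeff_mem_intAway_iff {δ : ℕ} {f : MvPolynomial (Fin n) ℚ} :
    (∀ d, f.coeff d ∈ intAway δ) ↔ ∀ q : ℕ, q.Prime → q ∣ den f → q ∣ δ := by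
  constructor
  · intro hf q hq hqf
    obtain ⟨d, -, hqd⟩ :=
      (hq.prime.dvd_finsetProd_iff _).1 (hqf.trans (Finset.lcm_dvd_prod _ _))
    exact hf d q hq hqd
  · intro hf d q hq hqd
    by_cases hd : d ∈ f.support
    · exact hf q hq (hqd.trans (Finset.dvd_lcm hd))
    · rw [notMem_support_iff.1 hd, Rat.den_zero, Nat.dvd_one] at hqd
      exact absurd hqd hq.ne_one

end GB

theorem stmt19_general {n : ℕ} (m : MonomialOrder (Fin n))
    (f : MvPolynomial (Fin n) ℚ)
    (I : Ideal (MvPolynomial (Fin n) ℚ)) (G : Finset (MvPolynomial (Fin n) ℚ))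
    (hG : GB.IsReducedGB m G I)
    (δ : ℕ)
    (hfδ : ∀ q : ℕ, q.Prime → q ∣ GB.den f → q ∣ δ)
    (hGδ : ∀ g ∈ G, m.toSyn (GB.lexp m g) ≤ m.toSyn (GB.lexp m f) →
      ∀ q : ℕ, q.Prime → q ∣ GB.den g → q ∣ δ)
    (r : MvPolynomial (Fin n) ℚ)
    (hr1 : f - r ∈ I)
    (hr2 : ∀ d ∈ r.support, ∀ g ∈ I, g ≠ 0 → ¬ GB.lexp m g ≤ d) :
    ∀ q : ℕ, q.Prime → q ∣ GB.den r → q ∣ δ := by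
  simp only [GB.lexp_eq_degree] at hGδ hr2
  set B : Set (MvPolynomial (Fin n) ℚ) := {g | g ∈ G ∧ m.degree g ≼[m] m.degree f}
  obtain ⟨r₀, hr₀δ, hr₀_span, hr₀_deg, hr₀_irrB⟩ := m.exists_remainder_coeff_mem (GB.intAway δ)
    (B := B) (fun g hg ↦ hG.2.1 g hg.1)
    (fun g hg ↦ GB.coeff_mem_intAway_iff.2 (hGδ g hg.1 hg.2)) (GB.coeff_mem_intAway_iff.2 hfδ)
  have hBI : Ideal.span B ≤ I := hG.1.2.2.1 ▸ Ideal.span_mono fun g hg ↦ hg.1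
  have hr₀_irr := hG.1.forall_not_degree_le hr₀_deg fun c hc g hgG hgf ↦
    hr₀_irrB c hc g ⟨hgG, hgf⟩
  have hrr₀ : r = r₀ := by
    refine m.eq_of_sub_mem_of_forall_not_degree_le ?_ hr2 hr₀_irr
    simpa only [sub_sub_sub_cancel_left] using I.sub_mem (hBI hr₀_span) hr1
  exact GB.coeff_mem_intAway_iff.1 (hrr₀ ▸ hr₀δ)

/-- the normal form of `f` w.r.t. the reduced σ-Gröbner basis has all
its coefficients in `ℤ_δ`, provided the coefficients of `f` and of every `g ∈ G_σ`
with `LT_σ(g) ≤_σ LT_σ(f)` lie in `ℤ_δ`. -/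
theorem stmt19 {n : ℕ} (m : MonomialOrder (Fin n))
    (f : MvPolynomial (Fin n) ℚ) (hf : f ≠ 0)
    (I : Ideal (MvPolynomial (Fin n) ℚ)) (G : Finset (MvPolynomial (Fin n) ℚ))
    (hG : GB.IsReducedGB m G I)
    (δ : ℕ) (hδ : 0 < δ)
    (hfδ : ∀ q : ℕ, q.Prime → q ∣ GB.den f → q ∣ δ)
    (hGδ : ∀ g ∈ G, m.toSyn (GB.lexp m g) ≤ m.toSyn (GB.lexp m f) →
      ∀ q : ℕ, q.Prime → q ∣ GB.den g → q ∣ δ)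
    (r : MvPolynomial (Fin n) ℚ)
    (hr1 : f - r ∈ I)
    (hr2 : ∀ d ∈ r.support, ∀ g ∈ I, g ≠ 0 → ¬ GB.lexp m g ≤ d) :
    ∀ q : ℕ, q.Prime → q ∣ GB.den r → q ∣ δ :=
  stmt19_general m f I G hG δ hfδ hGδ r hr1 hr2
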